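/- Let d ≥ 1 be an integer, let σ ≥ d+1 be real, and let 0 < ε < 2^{−12d−9}. Let (R^{βγ}) be complex coefficients indexed by pairs of multi-indices (β,γ) with |β+γ| = 6 and Δ(β+γ) ≤ 1, satisfying |R^{βγ}| ≤ 1. If q : ℤ^d → ℂ satisfies sup_{j∈ℤ^d} |q_j|(1+⟨j⟩)^σ ≤ 2ε, then for every j ∈ ℤ^d one has ∑_{β,γ} |R^{βγ}| · |γ_j − β_j| · |q^β conj(q)^γ| ≤ ε⁵ (1+⟨j⟩)^{−3σ} · 2^{−σ}, where the sum runs over all pairs (β,γ) of multi-indices with |β+γ| = 6 and Δ(β+γ) ≤ 1. In particular, the same bound holds for the Poisson bracket |{I_j, H}| of the action I_j = |q_j|² with the Hamiltonian H, which equals |∑_{β,γ} R^{βγ}(γ_j − β_j) q^β conj(q)^γ|. -/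

import Mathlib

open scoped BigOperators

noncomputable section

/-- ℓ¹ norm (as a natural number) of a lattice point in `ℤ^d`. -/
def norm1 {d : ℕ} (j : Fin d → ℤ) : ℕ := ∑ i, (j i).natAbs

/-- `⟨j⟩ = max(|j|₁, 1)`. -/
def jbra {d : ℕ} (j : Fin d → ℤ) : ℕ := max (norm1 j) 1

/-- ℓ¹-diameter of a finite set of lattice points. -/
def diam1 {d : ℕ} (S : Finset (Fin d → ℤ)) : ℕ :=
  (S ×ˢ S).sup fun p => norm1 (p.1 - p.2)

/-- Multi-indices on `ℤ^d`: finitely supported functions to `ℕ`. -/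
abbrev MIdx (d : ℕ) := (Fin d → ℤ) →₀ ℕ

/-- total weight `|m| = ∑ m_j` of a multi-index. -/
def wt {d : ℕ} (m : MIdx d) : ℕ := m.sum fun _ n => n

/-- `Δ(m)`: ℓ¹-diameter of the support of a multi-index. -/
def mdiam {d : ℕ} (m : MIdx d) : ℕ := diam1 m.support

/-- the monomial `q^β * conj(q)^γ`. -/
def mono {d : ℕ} (q : (Fin d → ℤ) → ℂ) (β γ : MIdx d) : ℂ :=
  (β.prod fun a n => q a ^ n) * (γ.prod fun a n => (starRingEnd ℂ) (q a) ^ n)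

/-- Index set of short-range degree-6 monomials. -/
abbrev PairIdx (d : ℕ) :=
  {p : MIdx d × MIdx d // wt (p.1 + p.2) = 6 ∧ mdiam (p.1 + p.2) ≤ 1}

/-!
Only pairs with `β j ≠ γ j` contribute, and for them `j ∈ supp (β + γ)`. Since `ℤ^d` has no
triangles, a set of ℓ¹-diameter at most `1` containing `j` lies in `{j, k}` for a nearest
neighbour `k` of `j`, so at most `2d · 7^4` pairs contribute. Every site `a` of such a support
has `1 + ⟨a⟩ ≥ max ⟨j⟩ 2`, and `max ⟨j⟩ 2 ^ 6 ≥ 2 (1 + ⟨j⟩)^3`, so each contributing term is at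
most `6 (2ε)^6 2^{-σ} (1 + ⟨j⟩)^{-3σ}`. The smallness `ε < 2^{-12d-9}` absorbs the remaining
factor `2d · 7^4 · 6 · 2^6 · ε`.
-/

open Finset

section LatticeGeometry

variable {d : ℕ}

lemma norm1_eq_zero_iff {x : Fin d → ℤ} : norm1 x = 0 ↔ x = 0 := by
  simp [norm1, Finset.sum_eq_zero_iff, funext_iff]

lemma norm1_sub_comm (x y : Fin d → ℤ) : norm1 (x - y) = norm1 (y - x) := by
  simp only [norm1, Pi.sub_apply, ← Int.natAbs_neg (x _ - y _), neg_sub]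

lemma norm1_add_le (x y : Fin d → ℤ) : norm1 (x + y) ≤ norm1 x + norm1 y := by
  simp only [norm1, ← Finset.sum_add_distrib]
  exact Finset.sum_le_sum fun i _ => Int.natAbs_add_le _ _

lemma norm1_single (i : Fin d) (c : ℤ) : norm1 (Pi.single i c) = c.natAbs := by
  rw [norm1, Finset.sum_eq_single i (fun b _ hb => by simp [hb]) (by simp)]
  simp

lemma exists_eq_single_of_norm1_eq_one {x : Fin d → ℤ} (h : norm1 x = 1) :
    ∃ i, ∃ s ∈ ({1, -1} : Finset ℤ), x = Pi.single i s := by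
  obtain ⟨i, hi⟩ : ∃ i, x i ≠ 0 := by
    by_contra! hx
    exact one_ne_zero (h.symm.trans (norm1_eq_zero_iff.2 (funext hx)))
  have hsplit : (x i).natAbs + ∑ l ∈ univ.erase i, (x l).natAbs = 1 := by
    rw [Finset.add_sum_erase _ (fun l => (x l).natAbs) (mem_univ i)]; exact h
  have hxi : (x i).natAbs = 1 := by
    have := Int.natAbs_pos.2 hi; omega
  have hrest : ∀ l ≠ i, x l = 0 := fun l hl => by
    have := Finset.single_le_sum (fun l _ => Nat.zero_le (x l).natAbs)
      (mem_erase.2 ⟨hl, mem_univ l⟩)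
    omega
  refine ⟨i, x i, ?_, funext fun l => ?_⟩
  · rcases Int.natAbs_eq_iff.1 hxi with h1 | h1 <;> simp [h1]
  · by_cases hl : l = i
    · subst hl; simp
    · simp [hl, hrest l hl]

lemma natCast_norm1 (x : Fin d → ℤ) : (norm1 x : ZMod 2) = ∑ i, (x i : ZMod 2) := by
  rw [norm1, Nat.cast_sum]
  refine Finset.sum_congr rfl fun i _ => ?_
  rcases Int.natAbs_eq (x i) with h | h <;> rw [h]
  · simp
  · simp [ZMod.neg_eq_self_mod_two]

/-- `ℤ^d` with nearest-neighbour edges is bipartite (colour by the parity of `∑ i, x i`),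
so it has no triangles. -/
lemma norm1_sub_ne_one {a b c : Fin d → ℤ} (hab : norm1 (a - b) = 1)
    (hbc : norm1 (b - c) = 1) : norm1 (a - c) ≠ 1 := by
  intro hac
  have key : (norm1 (a - c) : ZMod 2) = norm1 (a - b) + norm1 (b - c) := by
    simp only [natCast_norm1, ← Finset.sum_add_distrib, Pi.sub_apply, Int.cast_sub]
    exact Finset.sum_congr rfl fun _ _ => by ring
  rw [hab, hbc, hac] at key
  exact absurd key (by decide)

lemma jbra_le_jbra_add_one {a j : Fin d → ℤ} (h : norm1 (a - j) ≤ 1) :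
    jbra j ≤ jbra a + 1 := by
  have := norm1_add_le a (j - a)
  rw [add_sub_cancel, norm1_sub_comm] at this
  simp only [jbra]; omega

def nbrs (j : Fin d → ℤ) : Finset (Fin d → ℤ) :=
  (univ ×ˢ ({1, -1} : Finset ℤ)).image fun x => j + Pi.single x.1 x.2

lemma card_nbrs_le (j : Fin d → ℤ) : #(nbrs j) ≤ 2 * d := by
  calc #(nbrs j) ≤ #(univ ×ˢ ({1, -1} : Finset ℤ)) := card_image_le
    _ = 2 * d := by rw [card_product, card_univ, Fintype.card_fin]; simp [mul_comm]

lemma mem_nbrs {j k : Fin d → ℤ} (h : norm1 (k - j) = 1) : k ∈ nbrs j := by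
  obtain ⟨i, s, hs, hks⟩ := exists_eq_single_of_norm1_eq_one h
  exact mem_image.2 ⟨(i, s), mem_product.2 ⟨mem_univ i, hs⟩, by rw [← hks]; abel⟩

end LatticeGeometry

section ShortRange

variable {d : ℕ}

lemma norm1_sub_le_diam1 {S : Finset (Fin d → ℤ)} {a b : Fin d → ℤ} (ha : a ∈ S) (hb : b ∈ S) :
    norm1 (a - b) ≤ diam1 S :=
  Finset.le_sup (f := fun p : (Fin d → ℤ) × (Fin d → ℤ) => norm1 (p.1 - p.2))
    (b := (a, b)) (mem_product.2 ⟨ha, hb⟩)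

lemma norm1_sub_eq_one_of_diam1_le_one {S : Finset (Fin d → ℤ)} (hS : diam1 S ≤ 1)
    {a b : Fin d → ℤ} (ha : a ∈ S) (hb : b ∈ S) (hab : a ≠ b) : norm1 (a - b) = 1 := by
  have := norm1_sub_le_diam1 ha hb
  have : norm1 (a - b) ≠ 0 := fun h => hab (sub_eq_zero.1 (norm1_eq_zero_iff.1 h))
  omega

lemma exists_mem_nbrs_subset_pair (hd : 1 ≤ d) {S : Finset (Fin d → ℤ)} (hS : diam1 S ≤ 1)
    {j : Fin d → ℤ} (hj : j ∈ S) : ∃ k ∈ nbrs j, S ⊆ {j, k} := by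
  by_cases hk : ∃ k ∈ S, k ≠ j
  · obtain ⟨k, hkS, hkj⟩ := hk
    have hkj1 := norm1_sub_eq_one_of_diam1_le_one hS hkS hj hkj
    refine ⟨k, mem_nbrs hkj1, fun a ha => ?_⟩
    by_contra haS
    simp only [mem_insert, mem_singleton, not_or] at haS
    exact norm1_sub_ne_one (norm1_sub_eq_one_of_diam1_le_one hS ha hkS haS.2) hkj1
      (norm1_sub_eq_one_of_diam1_le_one hS ha hj haS.1)
  · push Not at hk
    refine ⟨j + Pi.single ⟨0, hd⟩ 1, mem_nbrs (by rw [add_sub_cancel_left, norm1_single]; rfl),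
      fun a ha => ?_⟩
    simp [hk a ha]

lemma apply_le_wt (m : MIdx d) (a : Fin d → ℤ) : m a ≤ wt m := by
  by_cases h : a ∈ m.support
  · exact Finset.single_le_sum (fun _ _ => Nat.zero_le _) h
  · simp [Finsupp.notMem_support_iff.1 h]

lemma mem_support_add_of_apply_ne {β γ : MIdx d} {j : Fin d → ℤ} (h : β j ≠ γ j) :
    j ∈ (β + γ).support := by
  rw [Finsupp.mem_support_iff, Finsupp.add_apply]
  omega

def twoSiteMIdx (j k : Fin d → ℤ) : Finset (MIdx d) :=
  ({j, k} : Finset (Fin d → ℤ)).finsupp fun _ => range 7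

def twoSitePairs (j : Fin d → ℤ) : Finset (MIdx d × MIdx d) :=
  (nbrs j).biUnion fun k => twoSiteMIdx j k ×ˢ twoSiteMIdx j k

lemma card_twoSiteMIdx_le (j k : Fin d → ℤ) : #(twoSiteMIdx j k) ≤ 7 ^ 2 := by
  rw [twoSiteMIdx, card_finsupp, prod_const, card_range]
  exact Nat.pow_le_pow_right (by norm_num) card_le_two

lemma card_twoSitePairs_le (j : Fin d → ℤ) : #(twoSitePairs j) ≤ 2 * d * 7 ^ 4 :=
  calc #(twoSitePairs j) ≤ ∑ k ∈ nbrs j, #(twoSiteMIdx j k ×ˢ twoSiteMIdx j k) :=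
        card_biUnion_le
    _ ≤ ∑ _k ∈ nbrs j, 7 ^ 2 * 7 ^ 2 := sum_le_sum fun k _ => by
        rw [card_product]; exact Nat.mul_le_mul (card_twoSiteMIdx_le j k) (card_twoSiteMIdx_le j k)
    _ ≤ 2 * d * 7 ^ 4 := by
        rw [sum_const, smul_eq_mul]
        exact (Nat.mul_le_mul_right _ (card_nbrs_le j)).trans_eq (by ring)

lemma mem_twoSitePairs (hd : 1 ≤ d) (j : Fin d → ℤ) (p : PairIdx d) (hp : p.1.1 j ≠ p.1.2 j) :
    p.1 ∈ twoSitePairs j := by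
  obtain ⟨⟨β, γ⟩, hwt, hdiam⟩ := p
  obtain ⟨k, hk, hsub⟩ := exists_mem_nbrs_subset_pair hd hdiam (mem_support_add_of_apply_ne hp)
  have hle : ∀ a, β a + γ a ≤ 6 := fun a => hwt ▸ apply_le_wt (β + γ) a
  have hβ : β ∈ twoSiteMIdx j k := mem_finsupp_iff.2
    ⟨fun a ha => hsub (Finsupp.support_mono le_self_add ha),
      fun a _ => mem_range.2 (by have := hle a; omega)⟩
  have hγ : γ ∈ twoSiteMIdx j k := mem_finsupp_iff.2
    ⟨fun a ha => hsub (Finsupp.support_mono le_add_self ha),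
      fun a _ => mem_range.2 (by have := hle a; omega)⟩
  exact mem_biUnion.2 ⟨k, hk, mem_product.2 ⟨hβ, hγ⟩⟩

end ShortRange

section Estimates

variable {d : ℕ}

lemma norm_mono_eq (q : (Fin d → ℤ) → ℂ) (β γ : MIdx d) :
    ‖mono q β γ‖ = (β + γ).prod fun a n => ‖q a‖ ^ n := by
  rw [Finsupp.prod_add_index' (fun _ => pow_zero _) (fun _ _ _ => pow_add _ _ _)]
  simp [mono, Finsupp.prod, norm_prod]

lemma prod_pow_le_pow_wt (m : MIdx d) {x : (Fin d → ℤ) → ℝ} {c : ℝ}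
    (hx : ∀ a ∈ m.support, 0 ≤ x a ∧ x a ≤ c) : (m.prod fun a n => x a ^ n) ≤ c ^ wt m := by
  rw [Finsupp.prod, wt, Finsupp.sum, ← Finset.prod_pow_eq_pow_sum]
  exact Finset.prod_le_prod (fun a ha => pow_nonneg (hx a ha).1 _)
    (fun a ha => pow_le_pow_left₀ (hx a ha).1 (hx a ha).2 _)

lemma two_mul_succ_pow_three_le {n : ℕ} (hn : 1 ≤ n) : 2 * (n + 1) ^ 3 ≤ max n 2 ^ 6 := by
  rcases le_or_gt n 2 with h | h
  · interval_cases n <;> norm_num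
  · rw [max_eq_left h.le]
    have h27 : 27 ≤ n ^ 3 := by simpa using Nat.pow_le_pow_left h 3
    nlinarith [Nat.pow_le_pow_left (by omega : n + 1 ≤ 2 * n) 3]

lemma norm_le_of_norm1_sub_le_one {σ ε : ℝ} (hσ : 0 ≤ σ) {q : (Fin d → ℤ) → ℂ}
    (hq : ∀ a, ‖q a‖ * (1 + (jbra a : ℝ)) ^ σ ≤ 2 * ε) {a j : Fin d → ℤ}
    (h : norm1 (a - j) ≤ 1) : ‖q a‖ ≤ 2 * ε * ((max (jbra j) 2 : ℕ) : ℝ) ^ (-σ) := by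
  have hpos : (0 : ℝ) < 1 + jbra a := by positivity
  have hM : ((max (jbra j) 2 : ℕ) : ℝ) ≤ 1 + jbra a := by
    have := jbra_le_jbra_add_one h
    have : 1 ≤ jbra a := le_max_right _ _
    exact_mod_cast (show max (jbra j) 2 ≤ 1 + jbra a by omega)
  have hqa : ‖q a‖ ≤ 2 * ε * (1 + (jbra a : ℝ)) ^ (-σ) := by
    rw [Real.rpow_neg hpos.le, ← div_eq_mul_inv, le_div_iff₀ (by positivity)]
    exact hq a
  have hε : 0 ≤ 2 * ε := (mul_nonneg (norm_nonneg _) (by positivity)).trans (hq a)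
  exact hqa.trans (mul_le_mul_of_nonneg_left
    (Real.rpow_le_rpow_of_nonpos (by positivity) hM (neg_nonpos.2 hσ)) hε)

lemma rpow_neg_pow_six_le {σ : ℝ} (hσ : 0 ≤ σ) {n : ℕ} (hn : 1 ≤ n) :
    (((max n 2 : ℕ) : ℝ) ^ (-σ)) ^ 6 ≤ (2 : ℝ) ^ (-σ) * (1 + n : ℝ) ^ (-(3 * σ)) := by
  have hle : 2 * (1 + n : ℝ) ^ 3 ≤ ((max n 2 : ℕ) : ℝ) ^ 6 := by
    rw [add_comm]; exact_mod_cast two_mul_succ_pow_three_le hn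
  calc (((max n 2 : ℕ) : ℝ) ^ (-σ)) ^ 6 = (((max n 2 : ℕ) : ℝ) ^ 6) ^ (-σ) :=
        Real.rpow_pow_comm (Nat.cast_nonneg _) _ _
    _ ≤ (2 * (1 + n : ℝ) ^ 3) ^ (-σ) :=
        Real.rpow_le_rpow_of_nonpos (by positivity) hle (neg_nonpos.2 hσ)
    _ = (2 : ℝ) ^ (-σ) * (1 + n : ℝ) ^ (-(3 * σ)) := by
        rw [Real.mul_rpow (by norm_num) (by positivity), ← Real.rpow_natCast,
          ← Real.rpow_mul (by positivity)]
        norm_num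

def bracketTerm (R : MIdx d → MIdx d → ℂ) (q : (Fin d → ℤ) → ℂ) (j : Fin d → ℤ)
    (p : PairIdx d) : ℝ :=
  ‖R p.1.1 p.1.2‖ * |((p.1.2 j : ℝ)) - ((p.1.1 j : ℝ))| * ‖mono q p.1.1 p.1.2‖

lemma bracketTerm_le {σ ε : ℝ} (hσ : 0 ≤ σ) {R : MIdx d → MIdx d → ℂ}
    (hRbd : ∀ β γ : MIdx d, wt (β + γ) = 6 → mdiam (β + γ) ≤ 1 → ‖R β γ‖ ≤ 1)
    {q : (Fin d → ℤ) → ℂ} (hq : ∀ a, ‖q a‖ * (1 + (jbra a : ℝ)) ^ σ ≤ 2 * ε)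
    (j : Fin d → ℤ) (p : PairIdx d) :
    bracketTerm R q j p ≤ 6 * (2 * ε) ^ 6 * ((2 : ℝ) ^ (-σ) * (1 + jbra j : ℝ) ^ (-(3 * σ))) := by
  obtain ⟨⟨β, γ⟩, hwt, hdiam⟩ := p
  by_cases hp : β j = γ j
  · simp only [bracketTerm, hp, sub_self, abs_zero, mul_zero, zero_mul]
    positivity
  have hnear : ∀ a ∈ (β + γ).support, norm1 (a - j) ≤ 1 := fun a ha =>
    (norm1_sub_le_diam1 ha (mem_support_add_of_apply_ne hp)).trans hdiam
  have hmono : ‖mono q β γ‖ ≤ (2 * ε * ((max (jbra j) 2 : ℕ) : ℝ) ^ (-σ)) ^ 6 := by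
    rw [norm_mono_eq, ← hwt]
    exact prod_pow_le_pow_wt _ fun a ha =>
      ⟨norm_nonneg _, norm_le_of_norm1_sub_le_one hσ hq (hnear a ha)⟩
  have hδ : |(γ j : ℝ) - β j| ≤ 6 := by
    have : ((β j : ℕ) : ℝ) + γ j ≤ 6 := by exact_mod_cast hwt ▸ apply_le_wt (β + γ) j
    rw [abs_sub_le_iff]
    constructor <;> linarith [(β j).cast_nonneg (α := ℝ), (γ j).cast_nonneg (α := ℝ)]
  calc bracketTerm R q j ⟨(β, γ), hwt, hdiam⟩
      ≤ 1 * 6 * (2 * ε * ((max (jbra j) 2 : ℕ) : ℝ) ^ (-σ)) ^ 6 := by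
        unfold bracketTerm
        gcongr
        exact hRbd β γ hwt hdiam
    _ = 6 * (2 * ε) ^ 6 * (((max (jbra j) 2 : ℕ) : ℝ) ^ (-σ)) ^ 6 := by ring
    _ ≤ _ := by
        gcongr
        exact rpow_neg_pow_six_le hσ (le_max_right _ _)

lemma bracketTerm_eq_norm (R : MIdx d → MIdx d → ℂ) (q : (Fin d → ℤ) → ℂ)
    (j : Fin d → ℤ) (p : PairIdx d) :
    bracketTerm R q j p =
      ‖R p.1.1 p.1.2 * (((p.1.2 j : ℂ)) - ((p.1.1 j : ℂ))) * mono q p.1.1 p.1.2‖ := by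
  rw [bracketTerm, norm_mul, norm_mul, ← Real.norm_eq_abs, ← Complex.norm_real]
  push_cast
  rfl

lemma mul_le_two_pow_twelve_mul_add_nine (hd : 1 ≤ d) :
    2 * d * 7 ^ 4 * 6 * 2 ^ 6 ≤ 2 ^ (12 * d + 9) := by
  induction d, hd using Nat.le_induction with
  | base => norm_num
  | succ n hn ih =>
    have h21 : 2 ^ 21 ≤ 2 ^ (12 * n + 9) := Nat.pow_le_pow_right (by norm_num) (by omega)
    rw [show 12 * (n + 1) + 9 = 12 * n + 9 + 12 by ring, pow_add]
    generalize 2 ^ (12 * n + 9) = N at h21 ih ⊢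
    norm_num at h21 ⊢
    linarith

lemma sum_bracketTerm_le (hd : 1 ≤ d) {σ ε : ℝ} (hσ : 0 ≤ σ) (hε0 : 0 ≤ ε)
    (hε1 : ε < (2 : ℝ) ^ (-(12 * (d : ℤ)) - 9)) {R : MIdx d → MIdx d → ℂ}
    (hRbd : ∀ β γ : MIdx d, wt (β + γ) = 6 → mdiam (β + γ) ≤ 1 → ‖R β γ‖ ≤ 1)
    {q : (Fin d → ℤ) → ℂ} (hq : ∀ a, ‖q a‖ * (1 + (jbra a : ℝ)) ^ σ ≤ 2 * ε)
    (j : Fin d → ℤ) (s : Finset (PairIdx d)) (hs : #s ≤ 2 * d * 7 ^ 4) :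
    ∑ p ∈ s, bracketTerm R q j p ≤ ε ^ 5 * (1 + (jbra j : ℝ)) ^ (-(3 * σ)) * (2 : ℝ) ^ (-σ) := by
  set B := ε ^ 5 * (1 + (jbra j : ℝ)) ^ (-(3 * σ)) * (2 : ℝ) ^ (-σ)
  have hB : 0 ≤ B := by positivity
  have hε : (2 : ℝ) ^ (12 * d + 9) * ε ≤ 1 := by
    have : (2 : ℝ) ^ (-(12 * (d : ℤ)) - 9) = ((2 : ℝ) ^ (12 * d + 9))⁻¹ := by
      rw [← zpow_natCast, ← zpow_neg]; push_cast; ring_nf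
    rw [this, ← mul_one (_⁻¹), lt_inv_mul_iff₀ (by positivity)] at hε1
    exact hε1.le
  have hconst : ((2 * d * 7 ^ 4 * 6 * 2 ^ 6 : ℕ) : ℝ) ≤ 2 ^ (12 * d + 9) := by
    exact_mod_cast mul_le_two_pow_twelve_mul_add_nine hd
  calc ∑ p ∈ s, bracketTerm R q j p
      ≤ #s • (6 * (2 * ε) ^ 6 * ((2 : ℝ) ^ (-σ) * (1 + jbra j : ℝ) ^ (-(3 * σ)))) :=
        sum_le_card_nsmul _ _ _ fun p _ => bracketTerm_le hσ hRbd hq j p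
    _ ≤ ((2 * d * 7 ^ 4 : ℕ) : ℝ) *
          (6 * (2 * ε) ^ 6 * ((2 : ℝ) ^ (-σ) * (1 + jbra j : ℝ) ^ (-(3 * σ)))) := by
        rw [nsmul_eq_mul]; gcongr
    _ = ((2 * d * 7 ^ 4 * 6 * 2 ^ 6 : ℕ) : ℝ) * ε * B := by push_cast; ring
    _ ≤ (2 : ℝ) ^ (12 * d + 9) * ε * B := by gcongr
    _ ≤ B := mul_le_of_le_one_left hB hε

end Estimates

/-- the tame estimate (5.6)–(5.8) of the paper.
If `⫴q⫴_σ ≤ 2ε` then `∑_{β,γ} |R^{βγ}| |γ_j − β_j| |q^β conj(q)^γ| ≤ ε⁵ (1+⟨j⟩)^{-3σ} 2^{-σ}`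
for every site `j`, and in particular the Poisson bracket
`|{I_j, H}| = |∑_{β,γ} R^{βγ}(γ_j − β_j) q^β conj(q)^γ|` satisfies the same bound. -/
theorem poisson_bracket_action_tame_bound
    (d : ℕ) (hd : 1 ≤ d) (σ ε : ℝ) (hσ : (d : ℝ) + 1 ≤ σ)
    (hε0 : 0 < ε) (hε1 : ε < (2 : ℝ) ^ (-(12 * (d : ℤ)) - 9))
    (R : MIdx d → MIdx d → ℂ)
    (hRbd : ∀ β γ : MIdx d, wt (β + γ) = 6 → mdiam (β + γ) ≤ 1 →
      ‖R β γ‖ ≤ 1)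
    (q : (Fin d → ℤ) → ℂ)
    (hq : ∀ j, ‖q j‖ * (1 + (jbra j : ℝ)) ^ σ ≤ 2 * ε)
    (j : Fin d → ℤ) :
    (∑' p : PairIdx d,
        ENNReal.ofReal (‖R p.1.1 p.1.2‖ *
          |((p.1.2 j : ℝ)) - ((p.1.1 j : ℝ))| * ‖mono q p.1.1 p.1.2‖))
      ≤ ENNReal.ofReal (ε ^ 5 * (1 + (jbra j : ℝ)) ^ (-(3 * σ)) * (2 : ℝ) ^ (-σ)) ∧
    ‖∑' p : PairIdx d,
        R p.1.1 p.1.2 * (((p.1.2 j : ℂ)) - ((p.1.1 j : ℂ))) * mono q p.1.1 p.1.2‖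
      ≤ ε ^ 5 * (1 + (jbra j : ℝ)) ^ (-(3 * σ)) * (2 : ℝ) ^ (-σ) := by
  set s : Finset (PairIdx d) :=
    (twoSitePairs j).subtype fun x => wt (x.1 + x.2) = 6 ∧ mdiam (x.1 + x.2) ≤ 1
  have hcard : #s ≤ 2 * d * 7 ^ 4 :=
    (card_subtype _ _).trans_le ((card_filter_le _ _).trans (card_twoSitePairs_le j))
  have hvanish : ∀ p ∉ s, p.1.2 j = p.1.1 j := fun p hp => by
    by_contra h
    exact hp (mem_subtype.2 (mem_twoSitePairs hd j p (Ne.symm h)))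
  have hsum := sum_bracketTerm_le hd (by linarith [(d.cast_nonneg : (0 : ℝ) ≤ d)]) hε0.le hε1
    hRbd hq j s hcard
  constructor
  · change ∑' p, ENNReal.ofReal (bracketTerm R q j p) ≤ _
    rw [tsum_eq_sum fun p hp => by simp [bracketTerm, hvanish p hp],
      ← ENNReal.ofReal_sum_of_nonneg fun p _ => by rw [bracketTerm_eq_norm]; positivity]
    exact ENNReal.ofReal_le_ofReal hsum
  · rw [tsum_eq_sum fun p hp => by simp [hvanish p hp]]
    exact (norm_sum_le _ _).trans (by simpa only [bracketTerm_eq_norm] using hsum)
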